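/- (Chopping big trees into little trees.) Let T₀ be a convex lacunary tree, let a : T₀ → [0,∞) satisfy ‖a‖_{size*(T₀)} ≤ C₀, and let 0 < δ ≤ C₀. Then T₀ can be partitioned as a disjoint union T₀ = ⋃_{T∈𝐓} T ∪ 𝐏, where each T ∈ 𝐓 is a convex tree with ‖a‖_{size*(T)} ≤ δ, each tile P ∈ 𝐏 satisfies a(P) ≤ C₀|I_P|, and there is a constant C(C₀, δ) depending only on C₀ and δ such that both the set 𝐏 and the set of tree tops {P_T : T ∈ 𝐓} are uniform C(C₀, δ)-packings of T₀. -/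

import Mathlib

open MeasureTheory Set

noncomputable section

namespace Dyadic

/-- A dyadic interval/lacunary tile: `I = [j·2^k, (j+1)·2^k)` with `-M ≤ k ≤ M`,
`I ⊆ [0, 2^M)`.  Lacunary tiles are in bijection with dyadic intervals, so we
identify the tile `P⁺(I) = I × [1/|I|, 2/|I|)` with the data of `I`. -/
structure Tile (M : ℕ) where
  j : ℤ
  k : ℤ
  hk_lb : -(M : ℤ) ≤ k
  hk_ub : k ≤ (M : ℤ)
  hj : 0 ≤ j
  hsub : ((j : ℝ) + 1) * 2 ^ k ≤ 2 ^ (M : ℤ)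

variable {M : ℕ}

/-- The side length `|I_P| = 2^k` of the spatial interval of the tile. -/
def Tile.len (P : Tile M) : ℝ := 2 ^ P.k

/-- The spatial interval `I_P` of the tile. -/
def Tile.ival (P : Tile M) : Set ℝ :=
  Ico ((P.j : ℝ) * 2 ^ P.k) (((P.j : ℝ) + 1) * 2 ^ P.k)

/-- The order `P ≤′ Q` on lacunary tiles: `I_P ⊆ I_Q`. -/
def Tile.le (P Q : Tile M) : Prop := P.ival ⊆ Q.ival

/-- A (lacunary) tree: a collection of tiles together with a top tile. -/
structure Tree (M : ℕ) where
  tiles : Set (Tile M)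
  top : Tile M
  top_mem : top ∈ tiles
  le_top : ∀ P ∈ tiles, P.le top

/-- `|I_T|`, the length of the spatial interval of the top of the tree. -/
def Tree.len (T : Tree M) : ℝ := T.top.len

/-- A collection of tiles is convex if `P₁ ≤′ P ≤′ P₂` with `P₁, P₂` in the
collection implies `P` is in the collection. -/
def IsConvex (PP : Set (Tile M)) : Prop :=
  ∀ P₁ ∈ PP, ∀ P₂ ∈ PP, ∀ P : Tile M, P₁.le P → P.le P₂ → P ∈ PP

/-- The size `‖a‖_{size(T)} = (1/|I_T|) Σ_{P ∈ T} a(P)` of `a` on a tree `T`. -/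
def treeSize (a : Tile M → ℝ) (T : Tree M) : ℝ :=
  (∑ᶠ P ∈ T.tiles, a P) / T.len

/-- The maximal size `‖a‖_{size*(PP)}`: the supremum of `‖a‖_{size(T)}` over all
convex trees `T ⊆ PP` (by convention `0` if there are none). -/
def maxSize (a : Tile M → ℝ) (PP : Set (Tile M)) : ℝ :=
  sSup (insert 0 {s : ℝ | ∃ T : Tree M, T.tiles ⊆ PP ∧ IsConvex T.tiles ∧ s = treeSize a T})

/-- The complete tree `Tree(P) = {Q : Q ≤′ P}`. -/
def cTree (P : Tile M) : Set (Tile M) := {Q : Tile M | Q.le P}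

/-- A tree `T` is complete with respect to `PP` if `T = Tree(P_T) ∩ PP`. -/
def Tree.IsCompleteIn (T : Tree M) (PP : Set (Tile M)) : Prop :=
  T.tiles = cTree T.top ∩ PP

/-- `QQ` is an `α`-packing of the tree `T`: `QQ ⊆ T` and `Σ_{P ∈ QQ} |I_P| ≤ α|I_T|`. -/
def IsPacking (α : ℝ) (QQ : Set (Tile M)) (T : Tree M) : Prop :=
  QQ ⊆ T.tiles ∧ (∑ᶠ P ∈ QQ, Tile.len P) ≤ α * T.len

/-- `QQ` is a uniform `α`-packing of the tree `T`:
`Σ_{P ∈ QQ, I_P ⊆ J} |I_P| ≤ α|J|` for every dyadic interval `J`. -/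
def IsUniformPacking (α : ℝ) (QQ : Set (Tile M)) (T : Tree M) : Prop :=
  QQ ⊆ T.tiles ∧
    ∀ J : Tile M, (∑ᶠ P ∈ {P ∈ QQ | P.ival ⊆ J.ival}, Tile.len P) ≤ α * J.len

/-- Left half of the spatial interval. -/
def Tile.left (P : Tile M) : Set ℝ :=
  Ico ((P.j : ℝ) * 2 ^ P.k) (((P.j : ℝ) + 1 / 2) * 2 ^ P.k)

/-- Right half of the spatial interval. -/
def Tile.right (P : Tile M) : Set ℝ :=
  Ico (((P.j : ℝ) + 1 / 2) * 2 ^ P.k) (((P.j : ℝ) + 1) * 2 ^ P.k)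

/-- The (mother) Haar wavelet `φ_P = |I_P|^{-1/2}(χ_{I_l} - χ_{I_r})`. -/
def Tile.haar (P : Tile M) : ℝ → ℝ := fun x =>
  (Real.sqrt P.len)⁻¹ * (P.left.indicator 1 x - P.right.indicator 1 x)

/-- The Haar (wavelet) coefficient `Wf(P) = ⟨f, φ_P⟩`. -/
def waveCoeff (f : ℝ → ℝ) (P : Tile M) : ℝ := ∫ x, f x * P.haar x

/-- The average `[f]_{I_P} = (1/|I_P|)∫_{I_P} f`. -/
def tileAvg (f : ℝ → ℝ) (P : Tile M) : ℝ := (∫ x in P.ival, f x) / P.len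

/-- The mean `‖f‖_{mean(P)} = (1/|I_P|)∫_{I_P} |f|`. -/
def tileMean (f : ℝ → ℝ) (P : Tile M) : ℝ := (∫ x in P.ival, |f x|) / P.len

/-- The maximal mean `‖f‖_{mean*(PP)} = sup_{P ∈ PP} ‖f‖_{mean(P)}`. -/
def maxMean (f : ℝ → ℝ) (PP : Set (Tile M)) : ℝ :=
  sSup (insert 0 (tileMean f '' PP))

/-- The dyadic BMO norm `‖f‖_{BMO} = ‖|Wf|²‖_{size*(PP⁺)}^{1/2}`. -/
def bmoNorm (M : ℕ) (f : ℝ → ℝ) : ℝ :=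
  Real.sqrt (maxSize (fun P : Tile M => waveCoeff f P ^ 2) univ)

/-- The grid interval `[j·2^{-M}, (j+1)·2^{-M})` at the finest scale. -/
def gridIval (M : ℕ) (j : ℤ) : Set ℝ :=
  Ico ((j : ℝ) * 2 ^ (-(M : ℤ))) (((j : ℝ) + 1) * 2 ^ (-(M : ℤ)))

/-- A dyadic test function: supported on `[0, 2^M)` and constant on every dyadic
interval of length `2^{-M}`. -/
def IsTestFun (M : ℕ) (f : ℝ → ℝ) : Prop :=
  (∀ x : ℝ, x ∉ Ico (0 : ℝ) (2 ^ (M : ℤ)) → f x = 0) ∧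
    ∀ j : ℤ, ∀ x ∈ gridIval M j, ∀ y ∈ gridIval M j, f x = f y

/-- The `L²` norm. -/
def l2Norm (f : ℝ → ℝ) : ℝ := Real.sqrt (∫ x, f x ^ 2)

/-- The `L^∞` norm (as a supremum of values; adequate for test functions). -/
def supNorm (f : ℝ → ℝ) : ℝ := ⨆ x : ℝ, |f x|

/-- The weak `L^r` quasinorm `sup_{λ>0} λ |{|h| ≥ λ}|^{1/r}`. -/
def weakNorm (r : ℝ) (h : ℝ → ℝ) : ℝ :=
  sSup {s : ℝ | ∃ l : ℝ, 0 < l ∧ s = l * (volume {x : ℝ | l ≤ |h x|}).toReal ^ (1 / r)}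

/-- The phase space projection `Π_T f = Σ_{P ∈ T} ⟨f, φ_P⟩ φ_P` onto a tree. -/
def treeProj (T : Tree M) (f : ℝ → ℝ) : ℝ → ℝ := fun x =>
  ∑ᶠ P ∈ T.tiles, waveCoeff f P * P.haar x

/-- The high-low paraproduct `π_hl(f,g) = Σ_P Wf(P) [g]_P φ_P`. -/
def paraHL (M : ℕ) (f g : ℝ → ℝ) : ℝ → ℝ := fun x =>
  ∑ᶠ P : Tile M, waveCoeff f P * tileAvg g P * P.haar x

/-- The low-high paraproduct `π_lh(f,g) = Σ_P [f]_P Wg(P) φ_P`. -/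
def paraLH (M : ℕ) (f g : ℝ → ℝ) : ℝ → ℝ := fun x =>
  ∑ᶠ P : Tile M, tileAvg f P * waveCoeff g P * P.haar x

/-- The high-high paraproduct `π_hh(f,g) = Σ_P Wf(P) Wg(P) χ_{I_P}/|I_P|`. -/
def paraHH (M : ℕ) (f g : ℝ → ℝ) : ℝ → ℝ := fun x =>
  ∑ᶠ P : Tile M, waveCoeff f P * waveCoeff g P * P.ival.indicator 1 x / P.len

/-- The constant function `1` on `[0, 2^M)`. -/
def oneFn (M : ℕ) : ℝ → ℝ := (Ico (0 : ℝ) (2 ^ (M : ℤ))).indicator 1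

/-- A perfect dyadic Calderón–Zygmund operator, recorded via its kernel `K` and
kernel constant `A₀`. -/
structure PDCZ (M : ℕ) where
  K : ℝ → ℝ → ℝ
  A₀ : ℝ
  hA₀ : 0 < A₀
  meas : Measurable (Function.uncurry K)
  bound : ∀ x y : ℝ, x ≠ y → |K x y| ≤ A₀ / |x - y|
  perfectX : ∀ I J : Tile M, Disjoint I.ival J.ival →
    ∀ x ∈ I.ival, ∀ x' ∈ I.ival, ∀ y ∈ J.ival, K x y = K x' y
  perfectY : ∀ I J : Tile M, Disjoint I.ival J.ival →
    ∀ x ∈ I.ival, ∀ x' ∈ I.ival, ∀ y ∈ J.ival, K y x = K y x'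
  diag : ∀ I : Tile M, I.k = -(M : ℤ) → ∀ x ∈ I.ival, ∀ y ∈ I.ival, K x y = 0
  corner₁ : ∀ x ∈ Ico (0 : ℝ) (2 ^ ((M : ℤ) - 1)),
    ∀ y ∈ Ico ((2 : ℝ) ^ ((M : ℤ) - 1)) (2 ^ (M : ℤ)), K x y = 0
  corner₂ : ∀ x ∈ Ico ((2 : ℝ) ^ ((M : ℤ) - 1)) (2 ^ (M : ℤ)),
    ∀ y ∈ Ico (0 : ℝ) (2 ^ ((M : ℤ) - 1)), K x y = 0

/-- `Tf(x) = ∫ K(x,y) f(y) dy`. -/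
def PDCZ.app (Op : PDCZ M) (f : ℝ → ℝ) : ℝ → ℝ := fun x => ∫ y, Op.K x y * f y

/-- The transpose `T*f(x) = ∫ K(y,x) f(y) dy`. -/
def PDCZ.appT (Op : PDCZ M) (f : ℝ → ℝ) : ℝ → ℝ := fun x => ∫ y, Op.K y x * f y

/-- Complex-valued Haar coefficient. -/
def waveCoeffC (b : ℝ → ℂ) (P : Tile M) : ℂ := ∫ x, b x * (P.haar x : ℂ)

/-- Complex-valued average. -/
def tileAvgC (b : ℝ → ℂ) (P : Tile M) : ℂ := (∫ x in P.ival, b x) / (P.len : ℂ)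

/-- BMO norm of a complex-valued function. -/
def bmoNormC (M : ℕ) (b : ℝ → ℂ) : ℝ :=
  Real.sqrt (maxSize (fun P : Tile M => ‖waveCoeffC b P‖ ^ 2) univ)

/-- Complex-valued dyadic test functions. -/
def IsTestFunC (M : ℕ) (b : ℝ → ℂ) : Prop :=
  (∀ x : ℝ, x ∉ Ico (0 : ℝ) (2 ^ (M : ℤ)) → b x = 0) ∧
    ∀ j : ℤ, ∀ x ∈ gridIval M j, ∀ y ∈ gridIval M j, b x = b y

/-- The operator applied to a complex-valued function. -/
def PDCZ.appC (Op : PDCZ M) (b : ℝ → ℂ) : ℝ → ℂ := fun x => ∫ y, (Op.K x y : ℂ) * b y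


end Dyadic

/-!
Run a bottom-up stopping time on `T₀`: a tile `P` stops once the `a`-mass of the tiles below it
that are not cut off from it by a lower stopping tile reaches `δ |I_P|`. These mass regions are
disjoint for distinct stopping tiles, so below any `J` the stopping tiles have total length at most
`δ⁻¹ Σ_{R ≤ J} a(R) ≤ (C₀ / δ) |J|`; they form `𝐏`. The other tiles split into the connected
components of `T₀ \ 𝐏`, convex trees in which every subtree carries mass `< δ` times the length of
its top. A component top other than the top of `T₀` sits directly below a stopping tile, and the
tops below one stopping tile are disjoint subintervals of it, so the tops inherit the packing of
`𝐏`, up to two extra tiles (the top of `T₀` and `J` itself) when counting below `J`.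
-/

open scoped Classical

theorem finsum_mem_eq_sum_univ_filter {β N : Type*} [Fintype β] [AddCommMonoid N] (s : Set β)
    (f : β → N) : ∑ᶠ x ∈ s, f x = ∑ x with x ∈ s, f x := by
  rw [finsum_mem_eq_toFinset_sum]
  congr
  ext
  simp

section StoppingTime

variable {α : Type*} [PartialOrder α] [Fintype α]

/-- The mass of `P` is the total weight `b` of those `R ≤ P` that are not separated from `P`
by a stopping element, i.e. an element `S` whose own mass reaches the threshold `θ S`. -/
def stopMass (b θ : α → ℝ) : α → ℝ :=
  wellFounded_lt.fix fun P mass =>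
    ∑ R with R ≤ P ∧ ∀ S (hS : S < P), R ≤ S → mass S hS < θ S, b R

def IsStopping (b θ : α → ℝ) (P : α) : Prop := θ P ≤ stopMass b θ P

variable {b θ : α → ℝ}

theorem stopMass_eq (b θ : α → ℝ) (P : α) :
    stopMass b θ P = ∑ R with R ≤ P ∧ ∀ S ∈ Ico R P, ¬ IsStopping b θ S, b R := by
  rw [stopMass, WellFounded.fix_eq]
  refine Finset.sum_congr (Finset.filter_congr fun R _ => ?_) fun _ _ => rfl
  simp only [IsStopping, not_le, mem_Ico, and_imp]
  exact and_congr_right fun _ => ⟨fun h S hRS hSP => h S hSP hRS, fun h S hSP hRS => h S hRS hSP⟩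

theorem sum_le_stopMass (hb : 0 ≤ b) {P : α} {s : Finset α}
    (hs : ∀ R ∈ s, R ≤ P ∧ ∀ S ∈ Ico R P, ¬ IsStopping b θ S) :
    ∑ R ∈ s, b R ≤ stopMass b θ P := by
  rw [stopMass_eq]
  exact Finset.sum_le_sum_of_subset_of_nonneg (fun R hR => by simpa using hs R hR)
    fun R _ _ => hb R

/-- The regions below distinct stopping elements are disjoint, so the thresholds of the
stopping elements below `J` are paid for by the weight below `J`. -/
theorem sum_threshold_stopping_le (hchain : ∀ R : α, IsChain (· ≤ ·) (Ici R)) (hb : 0 ≤ b)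
    (J : α) : ∑ P with IsStopping b θ P ∧ P ≤ J, θ P ≤ ∑ R with R ≤ J, b R := by
  set stops := ({P | IsStopping b θ P ∧ P ≤ J} : Finset α)
  set region := fun P => ({R | R ≤ P ∧ ∀ S ∈ Ico R P, ¬ IsStopping b θ S} : Finset α)
  have hdisj : (stops : Set α).PairwiseDisjoint region := by
    intro P₁ h₁ P₂ h₂ hne
    refine Finset.disjoint_left.2 fun R hR₁ hR₂ => ?_
    simp only [region, stops, Finset.coe_filter, Finset.mem_filter, Finset.mem_univ, true_and,
      Set.mem_ofPred_eq] at h₁ h₂ hR₁ hR₂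
    rcases (hchain R).total hR₁.1 hR₂.1 with h | h
    · exact hR₂.2 P₁ ⟨hR₁.1, lt_of_le_of_ne h hne⟩ h₁.1
    · exact hR₁.2 P₂ ⟨hR₂.1, lt_of_le_of_ne h hne.symm⟩ h₂.1
  calc ∑ P ∈ stops, θ P ≤ ∑ P ∈ stops, ∑ R ∈ region P, b R :=
        Finset.sum_le_sum fun P hP => (stopMass_eq b θ P ▸ (Finset.mem_filter.1 hP).2.1)
    _ = ∑ R ∈ stops.biUnion region, b R := (Finset.sum_biUnion hdisj).symm
    _ ≤ ∑ R with R ≤ J, b R := by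
        refine Finset.sum_le_sum_of_subset_of_nonneg (fun R hR => ?_) fun R _ _ => hb R
        obtain ⟨P, hP, hRP⟩ := Finset.mem_biUnion.1 hR
        simp only [region, stops, Finset.mem_filter, Finset.mem_univ, true_and] at hP hRP ⊢
        exact hRP.1.trans hP.2

end StoppingTime

section Components

variable {α : Type*} [PartialOrder α] {U X S : Set α} {A J R p t : α}

def componentBelow (U : Set α) (A : α) : Set α := {R | R ≤ A ∧ Icc R A ⊆ U}

def IsComponentTop (U : Set α) (A : α) : Prop := A ∈ U ∧ ∀ Q, A < Q → ¬ Icc A Q ⊆ U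

theorem componentBelow_subset : componentBelow U A ⊆ U :=
  fun _ hR => hR.2 ⟨le_rfl, hR.1⟩

theorem self_mem_componentBelow (hA : A ∈ U) : A ∈ componentBelow U A :=
  ⟨le_rfl, by simpa using hA⟩

theorem ordConnected_componentBelow : (componentBelow U A).OrdConnected :=
  ordConnected_iff.2 fun _ hR₁ _ hR₂ _ _ hR =>
    ⟨hR.2.trans hR₂.1, (Icc_subset_Icc_left hR.1).trans hR₁.2⟩

theorem Icc_subset_union_of_chain (hchain : IsChain (· ≤ ·) (Ici R)) (hRA : R ≤ A) :
    Icc R t ⊆ Icc R A ∪ Icc A t := fun _ hS =>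
  (hchain.total hS.1 hRA).imp (fun h => ⟨hS.1, h⟩) fun h => ⟨h, hS.2⟩

theorem exists_isComponentTop [Finite α] (hchain : ∀ R : α, IsChain (· ≤ ·) (Ici R))
    (hR : R ∈ U) : ∃ A, IsComponentTop U A ∧ R ∈ componentBelow U A := by
  obtain ⟨A, hRA, hmax⟩ := (toFinite {A | R ∈ componentBelow U A}).exists_maximal
    ⟨R, self_mem_componentBelow hR⟩
  refine ⟨A, ⟨hRA.2 ⟨hRA.1, le_rfl⟩, fun Q hAQ hQ => ?_⟩, hRA⟩
  have hRQ : R ∈ componentBelow U Q :=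
    ⟨hRA.1.trans hAQ.le, (Icc_subset_union_of_chain (hchain R) hRA.1).trans (union_subset hRA.2 hQ)⟩
  exact hAQ.not_ge (hmax hRQ hAQ.le)

theorem IsComponentTop.eq_of_mem (hchain : ∀ R : α, IsChain (· ≤ ·) (Ici R))
    {A' : α} (hA : IsComponentTop U A) (hA' : IsComponentTop U A')
    (hR : R ∈ componentBelow U A) (hR' : R ∈ componentBelow U A') : A = A' := by
  have key : ∀ {A A'}, IsComponentTop U A → R ∈ componentBelow U A → R ∈ componentBelow U A' →
      ¬ A < A' := fun hA hR hR' hlt => hA.2 _ hlt ((Icc_subset_Icc_left hR.1).trans hR'.2)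
  rcases (hchain R).total hR.1 hR'.1 with h | h
  · exact h.eq_of_not_lt (key hA hR hR')
  · exact (h.eq_of_not_lt (key hA' hR' hR)).symm

theorem IsComponentTop.exists_minimal_Ioc_mem [Finite α] (hX : X.OrdConnected)
    (ht : IsGreatest X t) (hA : IsComponentTop (X \ S) A) (hAt : A ≠ t) :
    ∃ p ∈ S, Minimal (· ∈ Ioc A t) p := by
  have hAX : A ∈ X := hA.1.1
  obtain ⟨p, hp⟩ := (toFinite (Ioc A t)).exists_minimal ⟨t, (ht.2 hAX).lt_of_ne hAt, le_rfl⟩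
  refine ⟨p, not_not.1 fun hpS => hA.2 p hp.1.1 fun Q hQ => ?_, hp⟩
  rcases hQ.1.eq_or_lt with rfl | hAQ
  · exact hA.1
  · obtain rfl := hp.eq_of_le ⟨hAQ, hQ.2.trans hp.1.2⟩ hQ.2
    exact ⟨hX.out hAX ht.1 ⟨hp.1.1.le, hp.1.2⟩, hpS⟩

theorem eq_of_minimal_Ioc_of_not_le (hchain : IsChain (· ≤ ·) (Ici A))
    (hp : Minimal (· ∈ Ioc A t) p) (hAJ : A ≤ J) (hpJ : ¬ p ≤ J) : J = A := by
  have hJp : J ≤ p := ((hchain.total hAJ hp.1.1.le).resolve_right hpJ)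
  rcases hAJ.eq_or_lt with rfl | hAJ
  · rfl
  · exact absurd (hp.eq_of_le ⟨hAJ, hJp.trans hp.1.2⟩ hJp).ge hpJ

end Components

theorem Ico_intCast_mul_subset_or_disjoint {u : ℝ} (hu : 0 < u) (j A B : ℤ) :
    Ico (j * u) ((j + 1) * u) ⊆ Ico (A * u) (B * u) ∨
      Disjoint (Ico ((j : ℝ) * u) ((j + 1) * u)) (Ico (A * u) (B * u)) := by
  have hmul {m n : ℤ} (h : m ≤ n) : (m : ℝ) * u ≤ n * u :=
    mul_le_mul_of_nonneg_right (by exact_mod_cast h) hu.le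
  rcases (by omega : A ≤ j ∧ j + 1 ≤ B ∨ j + 1 ≤ A ∨ B ≤ j) with ⟨hA, hB⟩ | h | h
  · exact .inl (Ico_subset_Ico (hmul hA) (by exact_mod_cast hmul hB))
  · exact .inr (Ico_disjoint_Ico.2 (min_le_left _ _ |>.trans
      ((by exact_mod_cast hmul h : ((j : ℝ) + 1) * u ≤ A * u).trans (le_max_right _ _))))
  · exact .inr (Ico_disjoint_Ico.2 (min_le_right _ _ |>.trans ((hmul h).trans (le_max_left _ _))))

namespace Dyadic

variable {M : ℕ}

namespace Tile

theorem len_pos (P : Tile M) : 0 < P.len := zpow_pos two_pos _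

theorem left_lt_right (P : Tile M) : (P.j : ℝ) * 2 ^ P.k < ((P.j : ℝ) + 1) * 2 ^ P.k := by
  linarith [P.len_pos, show P.len = 2 ^ P.k from rfl]

theorem ext' {P Q : Tile M} (hj : P.j = Q.j) (hk : P.k = Q.k) : P = Q := by
  cases P; cases Q; simp_all

theorem ival_injective : Function.Injective (Tile.ival (M := M)) := by
  intro P Q h
  obtain ⟨hl, hr⟩ := (Ico_eq_Ico_iff (Or.inl P.left_lt_right)).1 h
  have hk : P.k = Q.k :=
    zpow_right_injective₀ (two_pos : (0 : ℝ) < 2) (by norm_num) (show (2 : ℝ) ^ P.k = 2 ^ Q.k by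
      linarith)
  rw [hk] at hl
  exact ext' (by exact_mod_cast mul_right_cancel₀ (zpow_pos two_pos Q.k).ne' hl) hk

theorem j_lt (P : Tile M) : P.j < 4 ^ M := by
  have h : ((P.j : ℝ) + 1) * 2 ^ (-(M : ℤ)) ≤ 2 ^ (M : ℤ) :=
    (mul_le_mul_of_nonneg_left (zpow_le_zpow_right₀ one_le_two P.hk_lb)
      (by positivity [P.hj])).trans P.hsub
  rw [zpow_neg, ← div_eq_mul_inv, div_le_iff₀ (by positivity), zpow_natCast, ← mul_pow] at h
  exact_mod_cast (by linarith : (P.j : ℝ) < (2 * 2) ^ M)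

instance : Finite (Tile M) :=
  Finite.of_injective
    (fun P : Tile M => ((⟨P.j, P.hj, P.j_lt.le⟩ : Icc (0 : ℤ) (4 ^ M)),
      (⟨P.k, P.hk_lb, P.hk_ub⟩ : Icc (-(M : ℤ)) M)))
    fun _ _ h => ext' (congrArg (fun x => x.1.1) h) (congrArg (fun x => x.2.1) h)

instance : Fintype (Tile M) := Fintype.ofFinite _

instance : PartialOrder (Tile M) := PartialOrder.lift Tile.ival ival_injective

theorem le_def {P Q : Tile M} : P ≤ Q ↔ P.ival ⊆ Q.ival := Iff.rfl

theorem le_or_disjoint {P Q : Tile M} (hk : P.k ≤ Q.k) : P ≤ Q ∨ Disjoint P.ival Q.ival := by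
  obtain ⟨n, hn⟩ : ∃ n : ℕ, Q.k = P.k + n := ⟨(Q.k - P.k).toNat, by omega⟩
  have hQ : Q.ival =
      Ico (((Q.j * 2 ^ n : ℤ) : ℝ) * 2 ^ P.k) (((Q.j * 2 ^ n + 2 ^ n : ℤ) : ℝ) * 2 ^ P.k) := by
    rw [Tile.ival, hn, zpow_add₀ two_ne_zero, zpow_natCast]
    push_cast
    ring_nf
  rw [le_def, hQ]
  exact Ico_intCast_mul_subset_or_disjoint (zpow_pos two_pos _) _ _ _

theorem isChain_Ici (R : Tile M) : IsChain (· ≤ ·) (Ici R) := by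
  intro P hP Q hQ _
  obtain ⟨x, hx⟩ : R.ival.Nonempty := nonempty_Ico.2 R.left_lt_right
  have hPQ : ¬ Disjoint P.ival Q.ival := not_disjoint_iff.2 ⟨x, hP hx, hQ hx⟩
  rcases le_total P.k Q.k with hk | hk
  · exact .inl ((le_or_disjoint hk).resolve_right hPQ)
  · exact .inr ((le_or_disjoint hk).resolve_right (mt (·.symm) hPQ))

theorem pairwiseDisjoint_ival {s : Set (Tile M)} (hs : IsAntichain (· ≤ ·) s) :
    s.PairwiseDisjoint Tile.ival := by
  intro P hP Q hQ hne
  rcases le_total P.k Q.k with hk | hk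
  · exact (le_or_disjoint hk).resolve_left (hs hP hQ hne)
  · exact ((le_or_disjoint hk).resolve_left (hs hQ hP hne.symm)).symm

theorem volume_ival (P : Tile M) : volume P.ival = ENNReal.ofReal P.len := by
  rw [Tile.ival, Real.volume_Ico, Tile.len]
  ring_nf

theorem sum_len_le_of_isAntichain {s : Finset (Tile M)} {J : Tile M}
    (hs : IsAntichain (· ≤ ·) (s : Set (Tile M))) (hJ : ∀ P ∈ s, P ≤ J) :
    ∑ P ∈ s, P.len ≤ J.len := by
  rw [← ENNReal.ofReal_le_ofReal_iff J.len_pos.le,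
    ENNReal.ofReal_sum_of_nonneg fun P _ => P.len_pos.le]
  simp only [← volume_ival]
  rw [← measure_biUnion_finset (pairwiseDisjoint_ival hs) fun _ _ => measurableSet_Ico]
  exact measure_mono (iUnion₂_subset hJ)

theorem len_le_len {P Q : Tile M} (h : P ≤ Q) : P.len ≤ Q.len := by
  simpa using sum_len_le_of_isAntichain (s := {P}) (by simp) (by simpa using h)

theorem sum_len_le_two_mul {s : Finset (Tile M)} {Q J : Tile M} (hs : s ⊆ {Q, J})
    (hJ : ∀ P ∈ s, P ≤ J) : ∑ P ∈ s, P.len ≤ 2 * J.len := by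
  refine (Finset.sum_le_card_nsmul _ _ J.len fun P hP => len_le_len (hJ P hP)).trans ?_
  rw [nsmul_eq_mul]
  exact mul_le_mul_of_nonneg_right
    (by exact_mod_cast (Finset.card_le_card hs).trans Finset.card_le_two) J.len_pos.le

end Tile

theorem isConvex_iff_ordConnected {PP : Set (Tile M)} : IsConvex PP ↔ PP.OrdConnected :=
  ⟨fun h => ⟨fun _ h₁ _ h₂ _ hP => h _ h₁ _ h₂ _ hP.1 hP.2⟩,
    fun h _ h₁ _ h₂ _ l₁ l₂ => h.out h₁ h₂ ⟨l₁, l₂⟩⟩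

theorem Tree.ext' {T T' : Tree M} (h₁ : T.tiles = T'.tiles) (h₂ : T.top = T'.top) : T = T' := by
  cases T; cases T'; simp_all

instance : Finite (Tree M) :=
  Finite.of_injective (fun T : Tree M => (T.tiles, T.top))
    fun _ _ h => Tree.ext' (congrArg Prod.fst h) (congrArg Prod.snd h)

section Size

variable {a : Tile M → ℝ} {PP : Set (Tile M)} {C : ℝ}

theorem bddAbove_sizes (a : Tile M → ℝ) (PP : Set (Tile M)) :
    BddAbove
      (insert 0 {s : ℝ | ∃ T : Tree M, T.tiles ⊆ PP ∧ IsConvex T.tiles ∧ s = treeSize a T}) :=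
  (((finite_range (treeSize a)).insert 0).subset
    (insert_subset_insert (by rintro _ ⟨T, -, -, rfl⟩; exact ⟨T, rfl⟩))).bddAbove

theorem maxSize_nonneg (a : Tile M → ℝ) (PP : Set (Tile M)) : 0 ≤ maxSize a PP :=
  le_csSup (bddAbove_sizes a PP) (mem_insert _ _)

theorem treeSize_le_maxSize {T : Tree M} (hT : T.tiles ⊆ PP) (hconv : IsConvex T.tiles) :
    treeSize a T ≤ maxSize a PP :=
  le_csSup (bddAbove_sizes a PP) (mem_insert_of_mem _ ⟨T, hT, hconv, rfl⟩)

theorem maxSize_le (hC : 0 ≤ C)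
    (h : ∀ T : Tree M, T.tiles ⊆ PP → IsConvex T.tiles → ∑ᶠ P ∈ T.tiles, a P ≤ C * T.len) :
    maxSize a PP ≤ C := by
  refine csSup_le (insert_nonempty _ _) ?_
  rintro _ (rfl | ⟨T, hT, hconv, rfl⟩)
  · exact hC
  · exact div_le_of_le_mul₀ T.top.len_pos.le hC (h T hT hconv)

def treeBelow (PP : Set (Tile M)) (Q : Tile M) (hQ : Q ∈ PP) : Tree M where
  tiles := PP ∩ Iic Q
  top := Q
  top_mem := ⟨hQ, self_mem_Iic⟩
  le_top _ hP := hP.2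

theorem sum_le_of_maxSize_le (hconv : IsConvex PP) (hsize : maxSize a PP ≤ C) {Q : Tile M}
    (hQ : Q ∈ PP) : ∑ R with R ∈ PP ∧ R ≤ Q, a R ≤ C * Q.len := by
  have hconvQ : IsConvex (PP ∩ Iic Q) :=
    isConvex_iff_ordConnected.2 ((isConvex_iff_ordConnected.1 hconv).inter ordConnected_Iic)
  have h := (treeSize_le_maxSize (T := treeBelow PP Q hQ) inter_subset_left hconvQ).trans hsize
  rw [treeSize, div_le_iff₀ (show 0 < (treeBelow PP Q hQ).len from Q.len_pos),
    finsum_mem_eq_sum_univ_filter] at h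
  convert h using 3 <;> rfl

theorem le_mul_len_of_maxSize_le (ha : ∀ P, 0 ≤ a P) (hconv : IsConvex PP)
    (hsize : maxSize a PP ≤ C) {P : Tile M} (hP : P ∈ PP) : a P ≤ C * P.len :=
  (Finset.single_le_sum (fun R _ => ha R) (by simpa using hP)).trans
    (sum_le_of_maxSize_le hconv hsize hP)

/-- The tiles of `T₀` below `J` are all of `T₀`, or the subtree of `T₀` below `J ∈ T₀`, or none. -/
theorem sum_below_le_of_maxSize_le {T₀ : Tree M} (hconv : IsConvex T₀.tiles)
    (hsize : maxSize a T₀.tiles ≤ C) (J : Tile M) :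
    ∑ R with R ∈ T₀.tiles ∧ R ≤ J, a R ≤ C * J.len := by
  by_cases htop : T₀.top ≤ J
  · have hJ : ∀ R, R ∈ T₀.tiles ∧ R ≤ J ↔ R ∈ T₀.tiles ∧ R ≤ T₀.top :=
      fun R => ⟨fun h => ⟨h.1, T₀.le_top R h.1⟩, fun h => ⟨h.1, h.2.trans htop⟩⟩
    simp only [hJ]
    exact (sum_le_of_maxSize_le hconv hsize T₀.top_mem).trans
      (mul_le_mul_of_nonneg_left (Tile.len_le_len htop) ((maxSize_nonneg a _).trans hsize))
  by_cases hJ : J ∈ T₀.tiles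
  · exact sum_le_of_maxSize_le hconv hsize hJ
  · have hempty : ∀ R, ¬ (R ∈ T₀.tiles ∧ R ≤ J) := fun R ⟨hR, hRJ⟩ =>
      ((Tile.isChain_Ici R).total hRJ (T₀.le_top R hR)).elim
        (fun hJt => hJ (hconv R hR T₀.top T₀.top_mem J hRJ hJt)) htop
    rw [Finset.filter_false_of_mem fun R _ => hempty R, Finset.sum_empty]
    exact mul_nonneg ((maxSize_nonneg a _).trans hsize) J.len_pos.le

end Size

section ComponentTrees

variable {U : Set (Tile M)}

def componentTree (U : Set (Tile M)) (A : Tile M) (hA : A ∈ U) : Tree M where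
  tiles := componentBelow U A
  top := A
  top_mem := self_mem_componentBelow hA
  le_top _ hR := hR.1

def componentTrees (U : Set (Tile M)) : Set (Tree M) :=
  {T | IsComponentTop U T.top ∧ T.tiles = componentBelow U T.top}

theorem componentTree_mem {A : Tile M} (hA : IsComponentTop U A) :
    componentTree U A hA.1 ∈ componentTrees U :=
  ⟨hA, rfl⟩

theorem tiles_subset_of_mem_componentTrees {T : Tree M} (hT : T ∈ componentTrees U) :
    T.tiles ⊆ U :=
  hT.2 ▸ componentBelow_subset

theorem isConvex_of_mem_componentTrees {T : Tree M} (hT : T ∈ componentTrees U) :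
    IsConvex T.tiles :=
  isConvex_iff_ordConnected.2 (hT.2 ▸ ordConnected_componentBelow)

theorem biUnion_componentTrees : ⋃ T ∈ componentTrees U, T.tiles = U := by
  refine (iUnion₂_subset fun T hT => tiles_subset_of_mem_componentTrees hT).antisymm
    fun R hR => ?_
  obtain ⟨A, hA, hRA⟩ := exists_isComponentTop Tile.isChain_Ici hR
  exact mem_biUnion (componentTree_mem hA) hRA

theorem image_top_componentTrees : Tree.top '' componentTrees U = {A | IsComponentTop U A} :=
  (image_subset_iff.2 fun _ hT => hT.1).antisymm fun _ hA => ⟨_, componentTree_mem hA, rfl⟩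

theorem pairwise_disjoint_componentTrees :
    (componentTrees U).Pairwise fun T T' => Disjoint T.tiles T'.tiles := by
  intro T hT T' hT' hne
  refine not_not.1 fun h => hne ?_
  obtain ⟨R, hR, hR'⟩ := not_disjoint_iff.1 h
  have htop : T.top = T'.top :=
    hT.1.eq_of_mem Tile.isChain_Ici hT'.1 (hT.2 ▸ hR) (hT'.2 ▸ hR')
  exact Tree.ext' (by rw [hT.2, hT'.2, htop]) htop

end ComponentTrees

section Packing

variable {c : ℝ} {QQ S : Set (Tile M)} {T₀ : Tree M}

theorem isUniformPacking_iff : IsUniformPacking c QQ T₀ ↔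
    QQ ⊆ T₀.tiles ∧ ∀ J : Tile M, ∑ P with P ∈ QQ ∧ P ≤ J, P.len ≤ c * J.len := by
  simp only [IsUniformPacking, finsum_mem_eq_sum_univ_filter]
  simp only [Set.mem_ofPred_eq, Tile.le_def]

theorem IsUniformPacking.mono {c' : ℝ} (h : IsUniformPacking c QQ T₀) (hc : c ≤ c') :
    IsUniformPacking c' QQ T₀ :=
  ⟨h.1, fun J => (h.2 J).trans (mul_le_mul_of_nonneg_right hc J.len_pos.le)⟩

/-- A component top `A` other than `T₀.top` has a parent `p ∈ S` in `T₀`. The tops with a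
common parent `p ≤ J` are disjoint subsets of `p`, so they are paid for by the packing of `S`;
a top below `J` whose parent is not below `J` can only be `J` itself. -/
theorem IsUniformPacking.componentTops (hconv : IsConvex T₀.tiles)
    (hS : IsUniformPacking c S T₀) :
    IsUniformPacking (c + 2) {A | IsComponentTop (T₀.tiles \ S) A} T₀ := by
  choose! par hparS hpar using fun A (hA : IsComponentTop (T₀.tiles \ S) A ∧ A ≠ T₀.top) =>
    hA.1.exists_minimal_Ioc_mem (isConvex_iff_ordConnected.1 hconv) ⟨T₀.top_mem, T₀.le_top⟩ hA.2
  refine isUniformPacking_iff.2 ⟨fun A hA => hA.1.1, fun J => ?_⟩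
  set tops := ({A | IsComponentTop (T₀.tiles \ S) A ∧ A ≤ J} : Finset (Tile M))
  have hinner : ∑ A ∈ tops with A ≠ T₀.top ∧ par A ≤ J, A.len ≤ c * J.len := by
    rw [← Finset.sum_fiberwise_of_maps_to (g := par) (t := {p | p ∈ S ∧ p ≤ J}) fun A hA => by
      simp only [tops, Finset.mem_filter, Finset.mem_univ, true_and] at hA ⊢
      exact ⟨hparS A ⟨hA.1.1, hA.2.1⟩, hA.2.2⟩]
    refine (Finset.sum_le_sum fun p _ => Tile.sum_len_le_of_isAntichain ?_ ?_).trans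
      ((isUniformPacking_iff.1 hS).2 J)
    · intro A₁ h₁ A₂ h₂ hne hle
      simp only [tops, Finset.coe_filter, Finset.mem_filter, Finset.mem_univ, true_and,
        Set.mem_ofPred_eq] at h₁ h₂
      have hp₁ := hpar A₁ ⟨h₁.1.1.1, h₁.1.2.1⟩
      have hp₂ := hpar A₂ ⟨h₂.1.1.1, h₂.1.2.1⟩
      refine hne (eq_of_minimal_Ioc_of_not_le (Tile.isChain_Ici A₁) hp₁ hle ?_).symm
      exact (h₁.2 ▸ h₂.2 ▸ hp₂.1.1).not_ge
    · intro A hA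
      simp only [tops, Finset.mem_filter, Finset.mem_univ, true_and] at hA
      exact hA.2 ▸ (hpar A ⟨hA.1.1.1, hA.1.2.1⟩).1.1.le
  have houter : ∑ A ∈ tops with ¬ (A ≠ T₀.top ∧ par A ≤ J), A.len ≤ 2 * J.len := by
    refine Tile.sum_len_le_two_mul (Q := T₀.top) (fun A hA => ?_) fun A hA => ?_ <;>
      simp only [tops, Finset.mem_filter, Finset.mem_univ, true_and, not_and] at hA
    · by_cases ht : A = T₀.top
      · simp [ht]
      · simp [eq_of_minimal_Ioc_of_not_le (Tile.isChain_Ici A) (hpar A ⟨hA.1.1, ht⟩) hA.1.2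
          (hA.2 ht)]
    · exact hA.1.2
  show ∑ A ∈ tops, A.len ≤ (c + 2) * J.len
  rw [← Finset.sum_filter_add_sum_filter_not tops (fun A => A ≠ T₀.top ∧ par A ≤ J)]
  linarith

end Packing

section Chop

variable {T₀ : Tree M} {a : Tile M → ℝ} {C₀ δ : ℝ}

def chopStops (T₀ : Tree M) (a : Tile M → ℝ) (δ : ℝ) : Set (Tile M) :=
  T₀.tiles ∩ {P | IsStopping (T₀.tiles.indicator a) (fun P => δ * P.len) P}

theorem chopStops_subset : chopStops T₀ a δ ⊆ T₀.tiles := inter_subset_left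

theorem isUniformPacking_chopStops (hδ : 0 < δ) (ha : ∀ P, 0 ≤ a P)
    (hconv : IsConvex T₀.tiles) (hsize : maxSize a T₀.tiles ≤ C₀) :
    IsUniformPacking (C₀ / δ) (chopStops T₀ a δ) T₀ := by
  refine isUniformPacking_iff.2 ⟨chopStops_subset, fun J => ?_⟩
  rw [div_mul_eq_mul_div, le_div_iff₀' hδ, Finset.mul_sum]
  calc ∑ P with P ∈ chopStops T₀ a δ ∧ P ≤ J, δ * P.len
      ≤ ∑ P with IsStopping (T₀.tiles.indicator a) (fun P => δ * P.len) P ∧ P ≤ J, δ * P.len :=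
        Finset.sum_le_sum_of_subset_of_nonneg
          (fun P hP => by
            simp only [Finset.mem_filter] at hP ⊢
            exact ⟨hP.1, hP.2.1.2, hP.2.2⟩)
          fun P _ _ => (mul_pos hδ P.len_pos).le
    _ ≤ ∑ R with R ≤ J, T₀.tiles.indicator a R :=
        sum_threshold_stopping_le Tile.isChain_Ici (indicator_nonneg fun P _ => ha P) J
    _ = ∑ R with R ∈ T₀.tiles ∧ R ≤ J, a R := by
        simp only [Finset.sum_filter, indicator_apply, ← ite_and, and_comm]
    _ ≤ C₀ * J.len := sum_below_le_of_maxSize_le hconv hsize J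

theorem maxSize_le_of_mem_componentTrees (hδ : 0 ≤ δ) (ha : ∀ P, 0 ≤ a P) {T : Tree M}
    (hT : T ∈ componentTrees (T₀.tiles \ chopStops T₀ a δ)) : maxSize a T.tiles ≤ δ := by
  set b := T₀.tiles.indicator a
  have hU : ∀ R ∈ T₀.tiles \ chopStops T₀ a δ,
      R ∈ T₀.tiles ∧ ¬ IsStopping b (fun P => δ * P.len) R :=
    fun R hR => ⟨hR.1, fun h => hR.2 ⟨hR.1, h⟩⟩
  refine maxSize_le hδ fun T' hT' _ => ?_
  have hmem : ∀ R ∈ T'.tiles, R ∈ componentBelow (T₀.tiles \ chopStops T₀ a δ) T.top :=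
    fun R hR => hT.2 ▸ hT' hR
  have hfree : ∀ R ∈ T'.tiles, Icc R T'.top ⊆ T₀.tiles \ chopStops T₀ a δ := fun R hR =>
    (Icc_subset_Icc_right (hmem _ T'.top_mem).1).trans (hmem R hR).2
  calc ∑ᶠ P ∈ T'.tiles, a P = ∑ R with R ∈ T'.tiles, b R := by
        rw [finsum_mem_eq_sum_univ_filter]
        refine Finset.sum_congr rfl fun R hR => (indicator_of_mem ?_ a).symm
        simp only [Finset.mem_filter, Finset.mem_univ, true_and] at hR
        exact (hU R (hfree R hR ⟨le_rfl, T'.le_top R hR⟩)).1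
    _ ≤ stopMass b (fun P => δ * P.len) T'.top := by
        refine sum_le_stopMass (indicator_nonneg fun P _ => ha P) fun R hR => ?_
        simp only [Finset.mem_filter, Finset.mem_univ, true_and] at hR
        exact ⟨T'.le_top R hR, fun S hS => (hU S (hfree R hR (Ico_subset_Icc_self hS))).2⟩
    _ ≤ δ * T'.len := (not_le.1 (hU _ (hfree _ T'.top_mem ⟨le_rfl, le_rfl⟩)).2).le

end Chop

/-- Theorem 4.1: chopping big trees into little trees. -/
theorem statement4 (C₀ δ : ℝ) (hδ : 0 < δ) (hδC : δ ≤ C₀) :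
    ∃ C : ℝ, 0 < C ∧
      ∀ (M : ℕ) (T₀ : Tree M) (a : Tile M → ℝ),
        (∀ P, 0 ≤ a P) → IsConvex T₀.tiles → maxSize a T₀.tiles ≤ C₀ →
        ∃ (TT : Set (Tree M)) (PP : Set (Tile M)),
          T₀.tiles = (⋃ T ∈ TT, T.tiles) ∪ PP ∧
          (TT.Pairwise fun T T' => Disjoint T.tiles T'.tiles) ∧
          (∀ T ∈ TT, Disjoint T.tiles PP) ∧
          (∀ T ∈ TT, T.tiles ⊆ T₀.tiles ∧ IsConvex T.tiles ∧ maxSize a T.tiles ≤ δ) ∧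
          (∀ P ∈ PP, a P ≤ C₀ * P.len) ∧
          IsUniformPacking C PP T₀ ∧
          IsUniformPacking C (Tree.top '' TT) T₀ := by
  have hC₀ : 0 < C₀ := hδ.trans_le hδC
  refine ⟨C₀ / δ + 2, by positivity, fun M T₀ a ha hconv hsize => ?_⟩
  have hPP := isUniformPacking_chopStops hδ ha hconv hsize
  refine ⟨componentTrees (T₀.tiles \ chopStops T₀ a δ), chopStops T₀ a δ, ?_,
    pairwise_disjoint_componentTrees, fun T hT => ?_, fun T hT => ⟨?_, ?_, ?_⟩,
    fun P hP => le_mul_len_of_maxSize_le ha hconv hsize hP.1, hPP.mono (by linarith), ?_⟩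
  · rw [biUnion_componentTrees, sdiff_union_of_subset chopStops_subset]
  · exact disjoint_sdiff_left.mono_left (tiles_subset_of_mem_componentTrees hT)
  · exact (tiles_subset_of_mem_componentTrees hT).trans sdiff_subset
  · exact isConvex_of_mem_componentTrees hT
  · exact maxSize_le_of_mem_componentTrees hδ.le ha hT
  · rw [image_top_componentTrees]
    exact hPP.componentTops hconv

end Dyadic
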